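/- arXiv:1905.09793 — 2 statements merged into one kernel-verified Lean document; each statement's English description precedes it below -/
import Mathlib

section
/- For the symmetric case π_ω^p = π_ω^c = π_ω for all ω, the Jacobian matrix J of the map λ ↦ z(λ), given by J_{ωω'} = −(1/β + 1/α) − δ_{ωω'}·(1/(π_ω β) + 1/(π_ω α)), is symmetric negative definite; hence all its eigenvalues are strictly negative real numbers. -/
private lemma pow_pos_of_ne_zero_hack {a : ℝ} (h : a ≠ 0) : 0 < a ^ 2 :=
  pow_pos (abs_pos.mpr h) 2 |>.trans_eq (by rw [← abs_pow, abs_of_nonneg (sq_nonneg a)])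

theorem jacobian_symmetric_negative_definite (Ω : Type*) [Fintype Ω] [DecidableEq Ω]
    (α β : ℝ) (hα : 0 < α) (hβ : 0 < β)
    (π : Ω → ℝ) (hπ : ∀ ω, 0 < π ω) (hπ1 : ∑ ω, π ω = 1)
    (J : Matrix Ω Ω ℝ)
    (hJ : ∀ ω ω', J ω ω' = -(1/β + 1/α)
      - (if ω = ω' then 1/(π ω * β) + 1/(π ω * α) else 0)) :
    J.IsSymm ∧
    (∀ x : Ω → ℝ, x ≠ 0 → dotProduct x (J.mulVec x) < 0) ∧
    (∀ μ ∈ spectrum ℝ J, μ < 0) := by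
  set c : ℝ := 1/β + 1/α with hc
  have hcpos : 0 < c := by positivity
  set d : Ω → ℝ := fun ω => 1/(π ω * β) + 1/(π ω * α) with hd
  have hdpos : ∀ ω, 0 < d ω := fun ω => by
    have := hπ ω; positivity
  have key : ∀ x : Ω → ℝ,
      dotProduct x (J.mulVec x) = -c * (∑ ω, x ω)^2 - ∑ ω, d ω * (x ω)^2 := by
    intro x
    have : dotProduct x (J.mulVec x)
        = ∑ ω, ∑ ω', x ω * (J ω ω' * x ω') := by
      simp [dotProduct, Matrix.mulVec, Finset.mul_sum]
    rw [this]
    have : ∀ ω, ∑ ω', x ω * (J ω ω' * x ω')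
        = -c * (x ω * ∑ ω', x ω') - d ω * (x ω)^2 := by
      intro ω
      have : ∀ ω', x ω * (J ω ω' * x ω')
          = -c * (x ω * x ω') - (if ω = ω' then d ω * (x ω * x ω') else 0) := by
        intro ω'
        rw [hJ ω ω']
        simp only [hd]
        split_ifs with h <;> ring
      rw [Finset.sum_congr rfl fun ω' _ => this ω']
      rw [Finset.sum_sub_distrib, Finset.sum_ite_eq (Finset.univ) ω
        (fun ω' => d ω * (x ω * x ω')), if_pos (Finset.mem_univ ω),
        ← Finset.mul_sum, ← Finset.mul_sum]
      ring
    rw [Finset.sum_congr rfl fun ω _ => this ω, Finset.sum_sub_distrib,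
      ← Finset.mul_sum, ← Finset.sum_mul, sq]
  have hneg : ∀ x : Ω → ℝ, x ≠ 0 → dotProduct x (J.mulVec x) < 0 := by
    intro x hx
    rw [key x]
    have h1 : 0 < ∑ ω, d ω * (x ω)^2 := by
      obtain ⟨ω₀, hω₀⟩ : ∃ ω, x ω ≠ 0 := by
        by_contra h; push_neg at h; exact hx (funext h)
      apply Finset.sum_pos' (fun ω _ => mul_nonneg (hdpos ω).le (sq_nonneg _))
      exact ⟨ω₀, Finset.mem_univ _, mul_pos (hdpos ω₀) (pow_pos_of_ne_zero_hack hω₀)⟩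
    have h2 : -c * (∑ ω, x ω)^2 ≤ 0 := by nlinarith [sq_nonneg (∑ ω, x ω)]
    linarith
  refine ⟨?_, hneg, ?_⟩
  · ext ω ω'
    rw [Matrix.transpose_apply, hJ, hJ]
    by_cases h : ω = ω' <;> simp [h, eq_comm]
  · intro μ hμ
    have hμ' : μ ∈ spectrum ℝ (Matrix.toLin' J) := by
      rw [show Matrix.toLin' J = Matrix.toLinAlgEquiv' J from rfl,
        AlgEquiv.spectrum_eq]
      exact hμ
    have := Module.End.hasEigenvalue_iff_mem_spectrum.mpr hμ'
    obtain ⟨v, hv⟩ := this.exists_hasEigenvector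
    have hvec : J.mulVec v = μ • v := by
      have := hv.apply_eq_smul
      simpa [Matrix.toLin'_apply] using this
    have hvne : v ≠ 0 := hv.right
    have h1 : dotProduct v (J.mulVec v) = μ * ∑ ω, (v ω)^2 := by
      rw [hvec]
      simp only [dotProduct, Pi.smul_apply, smul_eq_mul, Finset.mul_sum]
      exact Finset.sum_congr rfl fun i _ => by ring
    have h2 := hneg v hvne
    rw [h1] at h2
    have h3 : 0 < ∑ ω, (v ω)^2 := by
      obtain ⟨ω₀, hω₀⟩ : ∃ ω, v ω ≠ 0 := by
        by_contra h; push_neg at h; exact hvne (funext h)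
      apply Finset.sum_pos' (fun ω _ => by positivity)
      exact ⟨ω₀, Finset.mem_univ _, pow_pos_of_ne_zero_hack hω₀⟩
    nlinarith
end

section
/- Suppose π_ω^mo = π_ω^p = π_ω^c for all ω ∈ Ω, and suppose (p*, r*, d*, l*, λ*) satisfies: (p*, r*) maximizes the producer objective J^p over 𝒪, (d*, l*) maximizes the consumer objective J^c over 𝒦, and for every ω the complementarity condition 0 ≤ p* + r*_ω + ξ_ω − d* − l*_ω ⊥ λ*_ω ≥ 0 holds. Then (p*, r*, d*, l*) is an optimal solution of the centralized problem: maximize [u(d) − c(p)] + Σ_ω π_ω^mo[u(l_ω) − c(r_ω)] subject to p + r_ω + ξ_ω − d − l_ω ≥ 0 for all ω and (p, r_ω) ∈ 𝒪, (d, l_ω) ∈ 𝒦, with λ* an optimal dual multiplier vector. -/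
/-! With common probabilities, the Lagrangian of the centralized problem with multipliers `λ*`
splits as `J^p(p, r) + J^c(d, l) + ∑ λ*_ω ξ_ω`, so the agents' optimal choices maximize it over
`𝒪 × 𝒦`. Since `λ* ≥ 0` and complementary slackness kills the penalty at the equilibrium, a
maximizer of the Lagrangian is optimal for the constrained problem. -/

open Finset

theorem isMaxOn_of_isMaxOn_lagrangian {X ι : Type*} [Fintype ι] {S : Set X} {f : X → ℝ}
    {g : X → ι → ℝ} {μ : ι → ℝ} {x₀ : X}
    (hmax : IsMaxOn (fun x => f x + ∑ i, μ i * g x i) S x₀)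
    (hμ : ∀ i, 0 ≤ μ i) (hslack : ∀ i, μ i * g x₀ i = 0) :
    IsMaxOn f {x ∈ S | ∀ i, 0 ≤ g x i} x₀ := by
  rintro x ⟨hxS, hgx⟩
  have hpen : 0 ≤ ∑ i, μ i * g x i := sum_nonneg fun i _ => mul_nonneg (hμ i) (hgx i)
  have hpen₀ : ∑ i, μ i * g x₀ i = 0 := sum_eq_zero fun i _ => hslack i
  have hlag := isMaxOn_iff.mp hmax x hxS
  show f x ≤ f x₀
  linarith

theorem welfare_add_lagrangian_eq {Ω : Type*} [Fintype Ω] (c u : ℝ → ℝ) (π lam ξ : Ω → ℝ)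
    (p d : ℝ) (r l : Ω → ℝ) :
    (u d - c p) + ∑ ω, π ω * (u (l ω) - c (r ω)) + ∑ ω, lam ω * (p + r ω + ξ ω - d - l ω)
      = (∑ ω, lam ω * (p + r ω) - ∑ ω, π ω * c (r ω) - c p)
        + (∑ ω, π ω * u (l ω) - ∑ ω, lam ω * (d + l ω) + u d) + ∑ ω, lam ω * ξ ω := by
  simp only [mul_sub, mul_add, sum_add_distrib, sum_sub_distrib]
  ring

theorem equilibrium_solves_centralized_problem_general (Ω : Type*) [Fintype Ω]
    (c u : ℝ → ℝ)
    (O K : Set (ℝ × (Ω → ℝ)))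
    (πmo πp πc : Ω → ℝ) (hπ : ∀ ω, πmo ω = πp ω ∧ πmo ω = πc ω)
    (ξ : Ω → ℝ) (lamStar : Ω → ℝ)
    (pStar dStar : ℝ) (rStar lStar : Ω → ℝ)
    (hprod : ∀ pr ∈ O, ∑ ω, lamStar ω * (pr.1 + pr.2 ω) - ∑ ω, πp ω * c (pr.2 ω) - c pr.1
      ≤ ∑ ω, lamStar ω * (pStar + rStar ω) - ∑ ω, πp ω * c (rStar ω) - c pStar)
    (hcons : ∀ dl ∈ K, ∑ ω, πc ω * u (dl.2 ω) - ∑ ω, lamStar ω * (dl.1 + dl.2 ω) + u dl.1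
      ≤ ∑ ω, πc ω * u (lStar ω) - ∑ ω, lamStar ω * (dStar + lStar ω) + u dStar)
    (hdual : ∀ ω, 0 ≤ lamStar ω)
    (hcomp : ∀ ω, lamStar ω * (pStar + rStar ω + ξ ω - dStar - lStar ω) = 0) :
    ∀ p d : ℝ, ∀ r l : Ω → ℝ, (p, r) ∈ O → (d, l) ∈ K →
      (∀ ω, 0 ≤ p + r ω + ξ ω - d - l ω) →
      (u d - c p) + ∑ ω, πmo ω * (u (l ω) - c (r ω))
        ≤ (u dStar - c pStar) + ∑ ω, πmo ω * (u (lStar ω) - c (rStar ω)) := by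
  have hπp : πmo = πp := funext fun ω => (hπ ω).1
  have hπc : πmo = πc := funext fun ω => (hπ ω).2
  subst hπp hπc
  intro p d r l hO hK hfeas
  have hlagrangian : IsMaxOn
      (fun x : (ℝ × (Ω → ℝ)) × (ℝ × (Ω → ℝ)) =>
        (u x.2.1 - c x.1.1) + ∑ ω, πmo ω * (u (x.2.2 ω) - c (x.1.2 ω))
          + ∑ ω, lamStar ω * (x.1.1 + x.1.2 ω + ξ ω - x.2.1 - x.2.2 ω))
      (O ×ˢ K) ((pStar, rStar), (dStar, lStar)) := by
    rintro ⟨⟨p, r⟩, ⟨d, l⟩⟩ ⟨hO, hK⟩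
    simp only [Set.mem_ofPred_eq, welfare_add_lagrangian_eq]
    linarith [hprod _ hO, hcons _ hK]
  exact isMaxOn_of_isMaxOn_lagrangian hlagrangian hdual hcomp
    (a := ((p, r), (d, l))) ⟨⟨hO, hK⟩, hfeas⟩

theorem equilibrium_solves_centralized_problem (Ω : Type*) [Fintype Ω]
    (α β γ : ℝ) (hα : 0 < α) (hβ : 0 < β) (hγ : 0 < γ)
    (c u : ℝ → ℝ)
    (hc : c = fun x => (1/2) * α * x ^ 2)
    (hu : u = fun x => γ * x - (1/2) * β * x ^ 2)
    (O K : Set (ℝ × (Ω → ℝ)))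
    (hOne : O.Nonempty) (hOcpt : IsCompact O) (hOconv : Convex ℝ O)
    (hKne : K.Nonempty) (hKcpt : IsCompact K) (hKconv : Convex ℝ K)
    (πmo πp πc : Ω → ℝ) (hπ : ∀ ω, πmo ω = πp ω ∧ πmo ω = πc ω)
    (ξ : Ω → ℝ) (lamStar : Ω → ℝ)
    (pStar dStar : ℝ) (rStar lStar : Ω → ℝ)
    (hpO : (pStar, rStar) ∈ O) (hdK : (dStar, lStar) ∈ K)
    (hprod : ∀ pr ∈ O, ∑ ω, lamStar ω * (pr.1 + pr.2 ω) - ∑ ω, πp ω * c (pr.2 ω) - c pr.1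
      ≤ ∑ ω, lamStar ω * (pStar + rStar ω) - ∑ ω, πp ω * c (rStar ω) - c pStar)
    (hcons : ∀ dl ∈ K, ∑ ω, πc ω * u (dl.2 ω) - ∑ ω, lamStar ω * (dl.1 + dl.2 ω) + u dl.1
      ≤ ∑ ω, πc ω * u (lStar ω) - ∑ ω, lamStar ω * (dStar + lStar ω) + u dStar)
    (hfeas : ∀ ω, 0 ≤ pStar + rStar ω + ξ ω - dStar - lStar ω)
    (hdual : ∀ ω, 0 ≤ lamStar ω)
    (hcomp : ∀ ω, lamStar ω * (pStar + rStar ω + ξ ω - dStar - lStar ω) = 0) :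
    ∀ p d : ℝ, ∀ r l : Ω → ℝ, (p, r) ∈ O → (d, l) ∈ K →
      (∀ ω, 0 ≤ p + r ω + ξ ω - d - l ω) →
      (u d - c p) + ∑ ω, πmo ω * (u (l ω) - c (r ω))
        ≤ (u dStar - c pStar) + ∑ ω, πmo ω * (u (lStar ω) - c (rStar ω)) :=
  equilibrium_solves_centralized_problem_general Ω c u O K πmo πp πc hπ ξ lamStar pStar dStar rStar
    lStar hprod hcons hdual hcomp
end
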